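/- Let K be a perfect metrizable Baire space. Then the sequential monotone closure of CD_ω(K) in B(K) equals {f ∈ B(K) : ∃ g ∈ DBSC(K) with {x : f(x)≠g(x)} at most countable}. -/

import Mathlib

/-!
An increasing limit `u` of functions `sₙ ∈ CD_ω(K)` agrees, off the countable union of the sets
`[sₙ ≠ gₙ]`, with the supremum of the continuous functions `gₙ` clamped to a bound of `u`; that
supremum is lower semicontinuous. Conversely, a bounded lower semicontinuous `h` is the increasing
limit of its continuous Pasch–Hausdorff envelopes `x ↦ ⨅ y, h y + n * dist x y`, and adding to each
of them the countably supported `f - h` keeps them in `CD_ω(K)` while the limit becomes `f`. Hence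
if `f` agrees with `h - k` off a countable set, `f = (f + k) - k` is a difference of increasing
limits from `CD_ω(K)`.
-/

open Filter

/-- f is a bounded real function (member of B(K)). -/
def Bdd {K : Type*} (f : K → ℝ) : Prop := ∃ C : ℝ, ∀ x, |f x| ≤ C

/-- The space CD_ω(K). -/
def CDomega (K : Type*) [TopologicalSpace K] : Set (K → ℝ) :=
  {f | Bdd f ∧ ∃ g : K → ℝ, Continuous g ∧ Bdd g ∧ {x | f x ≠ g x}.Countable}

/-- f is the pointwise limit of an increasing sequence from E, within B(K). -/
def UpLim {K : Type*} (E : Set (K → ℝ)) (f : K → ℝ) : Prop :=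
  Bdd f ∧ ∃ u : ℕ → K → ℝ, (∀ n, u n ∈ E) ∧ Monotone u ∧
    ∀ x, Tendsto (fun n => u n x) atTop (nhds (f x))

/-- g is a difference of bounded semicontinuous functions. -/
def DBSC {K : Type*} [TopologicalSpace K] (g : K → ℝ) : Prop :=
  ∃ h k : K → ℝ, Bdd h ∧ Bdd k ∧ LowerSemicontinuous h ∧ LowerSemicontinuous k ∧
    g = h - k

open Set Topology

theorem Bdd.add {K : Type*} {f g : K → ℝ} (hf : Bdd f) (hg : Bdd g) : Bdd (f + g) := by
  obtain ⟨C, hC⟩ := hf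
  obtain ⟨D, hD⟩ := hg
  exact ⟨C + D, fun x => (abs_add_le _ _).trans (add_le_add (hC x) (hD x))⟩

theorem Bdd.sub {K : Type*} {f g : K → ℝ} (hf : Bdd f) (hg : Bdd g) : Bdd (f - g) := by
  obtain ⟨C, hC⟩ := hf
  obtain ⟨D, hD⟩ := hg
  exact ⟨C + D, fun x => (abs_sub _ _).trans (add_le_add (hC x) (hD x))⟩

section PaschHausdorff

variable {X : Type*} [PseudoMetricSpace X] {h : X → ℝ} {m : ℝ}

noncomputable def paschHausdorff (h : X → ℝ) (n : ℕ) (x : X) : ℝ :=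
  ⨅ y, h y + n * dist x y

theorem bddBelow_range_add_mul_dist (hm : ∀ y, m ≤ h y) (n : ℕ) (x : X) :
    BddBelow (range fun y => h y + n * dist x y) :=
  ⟨m, forall_mem_range.2 fun y => le_add_of_le_of_nonneg (hm y) (by positivity)⟩

theorem paschHausdorff_le (hm : ∀ y, m ≤ h y) (n : ℕ) (x : X) : paschHausdorff h n x ≤ h x :=
  (ciInf_le (bddBelow_range_add_mul_dist hm n x) x).trans_eq (by simp)

theorem le_paschHausdorff (hm : ∀ y, m ≤ h y) (n : ℕ) (x : X) : m ≤ paschHausdorff h n x :=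
  have : Nonempty X := ⟨x⟩
  le_ciInf fun y => le_add_of_le_of_nonneg (hm y) (by positivity)

theorem monotone_paschHausdorff (hm : ∀ y, m ≤ h y) : Monotone (paschHausdorff h) :=
  fun k n hkn x =>
    have : Nonempty X := ⟨x⟩
    le_ciInf fun y => (ciInf_le (bddBelow_range_add_mul_dist hm k x) y).trans (by gcongr)

theorem lipschitzWith_paschHausdorff (hm : ∀ y, m ≤ h y) (n : ℕ) :
    LipschitzWith n (paschHausdorff h n) := by
  refine LipschitzWith.of_le_add_mul n fun x x' => ?_
  have : Nonempty X := ⟨x⟩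
  rw [← sub_le_iff_le_add]
  refine le_ciInf fun y => ?_
  rw [sub_le_iff_le_add]
  calc paschHausdorff h n x ≤ h y + n * dist x y := ciInf_le (bddBelow_range_add_mul_dist hm n x) y
    _ ≤ h y + n * dist x' y + n * dist x x' := by
      rw [add_assoc, ← mul_add, add_comm (dist x' y)]
      gcongr
      exact dist_triangle x x' y

theorem tendsto_paschHausdorff (hm : ∀ y, m ≤ h y) (hlsc : LowerSemicontinuous h) (x : X) :
    Tendsto (fun n => paschHausdorff h n x) atTop (𝓝 (h x)) := by
  refine tendsto_order.2 ⟨fun a ha => ?_,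
    fun a ha => Eventually.of_forall fun n => (paschHausdorff_le hm n x).trans_lt ha⟩
  obtain ⟨b, hab, hb⟩ := exists_between ha
  obtain ⟨δ, hδ, hball⟩ := Metric.eventually_nhds_iff.1 (hlsc x b hb)
  obtain ⟨N, hN⟩ := exists_nat_ge ((b - m) / δ)
  filter_upwards [eventually_ge_atTop N] with n hn
  have : Nonempty X := ⟨x⟩
  refine hab.trans_le (le_ciInf fun y => ?_)
  by_cases hy : dist y x < δ
  · exact le_add_of_le_of_nonneg (hball hy).le (by positivity)
  · have hfar : b - m ≤ n * dist x y :=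
      calc b - m ≤ N * δ := (div_le_iff₀ hδ).1 hN
        _ ≤ n * dist x y := by
          rw [dist_comm]
          gcongr
          exact not_lt.1 hy
    linarith [hm y]

end PaschHausdorff

theorem LowerSemicontinuous.exists_continuous_monotone_tendsto {X : Type*} [TopologicalSpace X]
    [TopologicalSpace.PseudoMetrizableSpace X] {h : X → ℝ} (hh : Bdd h)
    (hlsc : LowerSemicontinuous h) :
    ∃ φ : ℕ → X → ℝ, (∀ n, Continuous (φ n)) ∧ Monotone φ ∧ (∀ n, Bdd (φ n)) ∧
      ∀ x, Tendsto (fun n => φ n x) atTop (𝓝 (h x)) := by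
  let _ := TopologicalSpace.pseudoMetrizableSpacePseudoMetric X
  obtain ⟨C, hC⟩ := hh
  have hm : ∀ y, -C ≤ h y := fun y => (abs_le.1 (hC y)).1
  refine ⟨paschHausdorff h, fun n => (lipschitzWith_paschHausdorff hm n).continuous,
    monotone_paschHausdorff hm, fun n => ⟨C, fun x => abs_le.2 ⟨le_paschHausdorff hm n x,
      (paschHausdorff_le hm n x).trans (abs_le.1 (hC x)).2⟩⟩, tendsto_paschHausdorff hm hlsc⟩

section CDomega

variable {K : Type*} [TopologicalSpace K]

theorem UpLim.exists_lowerSemicontinuous_countable_ne {u : K → ℝ} (hu : UpLim (CDomega K) u) :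
    ∃ h : K → ℝ, Bdd h ∧ LowerSemicontinuous h ∧ {x | u x ≠ h x}.Countable := by
  obtain ⟨⟨Cu, hCu⟩, s, hs, hmono, htend⟩ := hu
  choose g hgc _ hgs using fun n => (hs n).2
  obtain ⟨C₀, hC₀⟩ := (hs 0).1
  set B := max C₀ Cu
  set c : ℕ → K → ℝ := fun n x => max (-B) (min (g n x) B)
  have hcB : ∀ n x, -B ≤ c n x ∧ c n x ≤ B := fun n x =>
    have hB : 0 ≤ B := (abs_nonneg _).trans ((hCu x).trans (le_max_right _ _))
    ⟨le_max_left _ _, max_le (by linarith) (min_le_right _ _)⟩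
  have hbdd : ∀ x, BddAbove (range fun n => c n x) :=
    fun x => ⟨B, forall_mem_range.2 fun n => (hcB n x).2⟩
  refine ⟨fun x => ⨆ n, c n x,
    ⟨B, fun x => abs_le.2 ⟨(hcB 0 x).1.trans (le_ciSup (hbdd x) 0), ciSup_le fun n => (hcB n x).2⟩⟩,
    lowerSemicontinuous_ciSup hbdd fun n =>
      (continuous_const.max ((hgc n).min continuous_const)).lowerSemicontinuous,
    (countable_iUnion hgs).mono fun x hx => ?_⟩
  by_contra hxN
  simp only [mem_iUnion, mem_ofPred_eq, not_exists, not_not] at hxN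
  have hsx : Monotone fun n => s n x := fun a b hab => hmono hab x
  have hcs : ∀ n, c n x = s n x := fun n => by
    have hup : s n x ≤ B :=
      (hsx.ge_of_tendsto (htend x) n).trans ((abs_le.1 (hCu x)).2.trans (le_max_right _ _))
    have hlow : -B ≤ s n x :=
      (neg_le_neg (le_max_left _ _)).trans ((abs_le.1 (hC₀ x)).1.trans (hsx (Nat.zero_le n)))
    simp only [c, ← hxN n, min_eq_left hup, max_eq_right hlow]
  apply hx
  simp only [hcs]
  exact (isLUB_of_tendsto_atTop hsx (htend x)).ciSup_eq.symm

theorem upLim_cdomega_of_countable_ne [TopologicalSpace.PseudoMetrizableSpace K] {f h : K → ℝ}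
    (hf : Bdd f) (hh : Bdd h) (hlsc : LowerSemicontinuous h) (hfh : {x | f x ≠ h x}.Countable) :
    UpLim (CDomega K) f := by
  obtain ⟨φ, hφc, hφm, hφb, hφt⟩ := hlsc.exists_continuous_monotone_tendsto hh
  refine ⟨hf, fun n => φ n + (f - h),
    fun n => ⟨(hφb n).add (hf.sub hh), φ n, hφc n, hφb n, hfh.mono fun x hx => ?_⟩,
    fun k n hkn => add_le_add_left (hφm hkn) _, fun x => ?_⟩
  · simp only [mem_ofPred_eq, Pi.add_apply, Pi.sub_apply] at hx ⊢
    contrapose! hx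
    rw [hx, sub_self, add_zero]
  · simpa using (hφt x).add_const (f x - h x)

end CDomega

theorem stmt10_general {K : Type*} [TopologicalSpace K] [TopologicalSpace.MetrizableSpace K] :
    {f : K → ℝ | Bdd f ∧ ∃ u v : K → ℝ, UpLim (CDomega K) u ∧ UpLim (CDomega K) v ∧
        f = u - v} =
      {f : K → ℝ | Bdd f ∧ ∃ g : K → ℝ, DBSC g ∧ {x | f x ≠ g x}.Countable} := by
  ext f
  constructor
  · rintro ⟨hf, u, v, hu, hv, rfl⟩
    obtain ⟨h, hh, hhl, huh⟩ := hu.exists_lowerSemicontinuous_countable_ne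
    obtain ⟨k, hk, hkl, hvk⟩ := hv.exists_lowerSemicontinuous_countable_ne
    refine ⟨hf, h - k, ⟨h, k, hh, hk, hhl, hkl, rfl⟩, (huh.union hvk).mono fun x hx => ?_⟩
    contrapose! hx
    simp only [mem_union, mem_ofPred_eq, not_or, not_not] at hx
    simp [hx.1, hx.2]
  · rintro ⟨hf, _, ⟨h, k, hh, hk, hhl, hkl, rfl⟩, hfg⟩
    refine ⟨hf, f + k, k, upLim_cdomega_of_countable_ne (hf.add hk) hh hhl (hfg.mono ?_),
      upLim_cdomega_of_countable_ne hk hk hkl (by simp), by simp⟩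
    intro x hx
    simp only [mem_ofPred_eq, Pi.add_apply, Pi.sub_apply] at hx ⊢
    contrapose! hx
    rw [hx, sub_add_cancel]

/-- Let K be a perfect metrizable Baire space. Then the sequential
monotone closure of CD_ω(K) in B(K), i.e. u(CD_ω(K)) − u(CD_ω(K)), equals
{f ∈ B(K) : ∃ g ∈ DBSC(K), [f ≠ g] at most countable}. -/
theorem stmt10 {K : Type*} [TopologicalSpace K] [TopologicalSpace.MetrizableSpace K]
    [BaireSpace K] (hperfect : ∀ x : K, ¬ IsOpen ({x} : Set K)) :
    {f : K → ℝ | Bdd f ∧ ∃ u v : K → ℝ, UpLim (CDomega K) u ∧ UpLim (CDomega K) v ∧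
        f = u - v} =
      {f : K → ℝ | Bdd f ∧ ∃ g : K → ℝ, DBSC g ∧ {x | f x ≠ g x}.Countable} :=
  stmt10_general
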